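/- Let (L,∘) be a pre-Lie algebra over a field k of characteristic 0 and let r ∈ L⊗L be a symmetric solution of the S-equation in (L,∘). Define δ : L → L⊗L by δ(a) := (L∘(a)⊗id + id⊗(L∘(a)−R∘(a)))(r). Then (L,∘,δ) is a pre-Lie bialgebra. -/
import Mathlib


open TensorProduct

noncomputable section

variable {k : Type*} [Field k]
section AlgDefs
variable {A : Type*} [AddCommGroup A] [Module k A]

/-- A pre-Lie algebra structure: `(a∘b)∘c − a∘(b∘c) = (b∘a)∘c − b∘(a∘c)`. -/
def IsPreLie (op : A →ₗ[k] A →ₗ[k] A) : Prop :=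
  ∀ a b c : A, op (op a b) c - op a (op b c) = op (op b a) c - op b (op a c)

/-- A Novikov algebra: a pre-Lie algebra with `(a∘b)∘c = (a∘c)∘b`. -/
def IsNovikov (op : A →ₗ[k] A →ₗ[k] A) : Prop :=
  IsPreLie op ∧ ∀ a b c : A, op (op a b) c = op (op a c) b

/-- A pre-Novikov algebra with operations `l = ◁` and `r = ▷`,
writing `a∘b := a◁b + a▷b`. -/
def IsPreNovikov (l r : A →ₗ[k] A →ₗ[k] A) : Prop :=
  (∀ a b c : A, r a (r b c) = r (l a b + r a b) c + r b (r a c) - r (l b a + r b a) c) ∧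
  (∀ a b c : A, r a (l b c) = l (r a b) c + l b (l a c + r a c) - l (l b a) c) ∧
  (∀ a b c : A, r (l a b + r a b) c = l (r a c) b) ∧
  (∀ a b c : A, l (l a b) c = l (l a c) b)

/-- A right Novikov algebra. -/
def IsRightNovikov (d : A →ₗ[k] A →ₗ[k] A) : Prop :=
  (∀ x y z : A, d (d x y) z - d x (d y z) = d (d x z) y - d x (d z y)) ∧
  (∀ x y z : A, d x (d y z) = d y (d x z))

/-- A right Novikov dialgebra with operations `dl = ⊣` and `dr = ⊢`. -/
def IsRightNovikovDialgebra (dl dr : A →ₗ[k] A →ₗ[k] A) : Prop :=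
  (∀ x y z : A, dr x (dr y z) = dr y (dr x z)) ∧
  (∀ x y z : A, dr x (dl y z) = dl y (dl x z)) ∧
  (∀ x y z : A, dr (dr x y - dl x y) z = 0) ∧
  (∀ x y z : A, dl x (dr y z - dl y z) = 0) ∧
  (∀ x y z : A, dr x (dr y z - dl z y) = dr (dr x y) z - dl (dr x z) y) ∧
  (∀ x y z : A, dl x (dr y z - dl z y) = dl (dl x y) z - dl (dl x z) y)

/-- A quadratic right Novikov algebra: a right Novikov algebra with a symmetric
nondegenerate bilinear form satisfying `(x⋄y,z) = −(x, y⋄z + z⋄y)`. -/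
def IsQuadraticRightNovikov (d : A →ₗ[k] A →ₗ[k] A) (bf : A →ₗ[k] A →ₗ[k] k) : Prop :=
  IsRightNovikov d ∧ (∀ x y : A, bf x y = bf y x) ∧
  (∀ x : A, (∀ y : A, bf x y = 0) → x = 0) ∧
  (∀ x y z : A, bf (d x y) z = - bf x (d y z + d z y))

/-- A quadratic pre-Lie algebra: a pre-Lie algebra with a skew-symmetric nondegenerate
bilinear form satisfying `ω(u∘v,w) = −ω(v, u∘w − w∘u)`. -/
def IsQuadraticPreLie (op : A →ₗ[k] A →ₗ[k] A) (w : A →ₗ[k] A →ₗ[k] k) : Prop :=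
  IsPreLie op ∧ (∀ u v : A, w u v = - w v u) ∧
  (∀ u : A, (∀ v : A, w u v = 0) → u = 0) ∧
  (∀ u v x : A, w (op u v) x = - w v (op u x - op x u))

end AlgDefs
section CoDefs
variable {A : Type*} [AddCommGroup A] [Module k A]

/-- `(f ⊗ id)` on `A⊗A`, landing in `A⊗(A⊗A)` via the associator. -/
def lmap3 (f : A →ₗ[k] A ⊗[k] A) : A ⊗[k] A →ₗ[k] A ⊗[k] (A ⊗[k] A) :=
  (TensorProduct.assoc k A A A).toLinearMap ∘ₗ TensorProduct.map f LinearMap.id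

/-- `(id ⊗ f)` on `A⊗A`, landing in `A⊗(A⊗A)`. -/
def rmap3 (f : A →ₗ[k] A ⊗[k] A) : A ⊗[k] A →ₗ[k] A ⊗[k] (A ⊗[k] A) :=
  TensorProduct.map LinearMap.id f

/-- `τ ⊗ id` on the triple tensor product `A⊗(A⊗A)`: `a⊗(b⊗c) ↦ b⊗(a⊗c)`. -/
def swap12 : A ⊗[k] (A ⊗[k] A) →ₗ[k] A ⊗[k] (A ⊗[k] A) :=
  (TensorProduct.assoc k A A A).toLinearMap ∘ₗ
    TensorProduct.map (TensorProduct.comm k A A).toLinearMap LinearMap.id ∘ₗ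
    (TensorProduct.assoc k A A A).symm.toLinearMap

/-- `id ⊗ τ` on the triple tensor product `A⊗(A⊗A)`: `a⊗(b⊗c) ↦ a⊗(c⊗b)`. -/
def swap23 : A ⊗[k] (A ⊗[k] A) →ₗ[k] A ⊗[k] (A ⊗[k] A) :=
  TensorProduct.map LinearMap.id (TensorProduct.comm k A A).toLinearMap

/-- The flip `τ` on `A ⊗ A`. -/
def tau2 : A ⊗[k] A →ₗ[k] A ⊗[k] A := (TensorProduct.comm k A A).toLinearMap

/-- A pre-Novikov coalgebra `(A, α, β)`. -/
def IsPreNovikovCoalgebra (α β : A →ₗ[k] A ⊗[k] A) : Prop :=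
  (∀ a : A, lmap3 α (α a) + swap12 (rmap3 α (β a)) - rmap3 (α + β) (α a)
      - swap12 (lmap3 β (α a)) = 0) ∧
  (∀ a : A, rmap3 β (β a) + swap12 (lmap3 (α + β) (β a)) - lmap3 (α + β) (β a)
      - swap12 (rmap3 β (β a)) = 0) ∧
  (∀ a : A, swap23 (lmap3 β (α a)) - lmap3 (α + β) (β a) = 0) ∧
  (∀ a : A, swap23 (lmap3 α (α a)) - lmap3 α (α a) = 0)

/-- A right Novikov co-dialgebra `(B, Δα, Δβ)` (denoted `(A, Da, Db)` here). -/
def IsRightNovikovCoDialgebra (Da Db : A →ₗ[k] A ⊗[k] A) : Prop :=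
  (∀ x : A, rmap3 Db (Db x) = swap12 (rmap3 Db (Db x))) ∧
  (∀ x : A, rmap3 Da (Db x) = swap12 (rmap3 Da (Da x))) ∧
  (∀ x : A, lmap3 Db (Db x) = lmap3 Da (Db x)) ∧
  (∀ x : A, rmap3 Db (Da x) = rmap3 Da (Da x)) ∧
  (∀ x : A, rmap3 Db (Db x) - swap23 (rmap3 Da (Db x))
      = lmap3 Db (Db x) - swap23 (lmap3 Db (Da x))) ∧
  (∀ x : A, rmap3 Db (Da x) - swap23 (rmap3 Da (Da x))
      = lmap3 Da (Da x) - swap23 (lmap3 Da (Da x)))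

/-- A pre-Lie coalgebra `(L, δ)`. -/
def IsPreLieCoalgebra (δ : A →ₗ[k] A ⊗[k] A) : Prop :=
  ∀ a : A, rmap3 δ (δ a) - swap12 (rmap3 δ (δ a)) = lmap3 δ (δ a) - swap12 (lmap3 δ (δ a))

/-- A right Novikov coalgebra `(B, Δ)`. -/
def IsRightNovikovCoalgebra (Δ : A →ₗ[k] A ⊗[k] A) : Prop :=
  (∀ x : A, lmap3 Δ (Δ x) - swap23 (lmap3 Δ (Δ x))
      = rmap3 Δ (Δ x) - swap23 (rmap3 Δ (Δ x))) ∧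
  (∀ x : A, rmap3 Δ (Δ x) = swap12 (rmap3 Δ (Δ x)))

end CoDefs
section BiDefs
variable {A : Type*} [AddCommGroup A] [Module k A]

/-- A pre-Novikov bialgebra `(A, ◁, ▷, α, β)` (with `l = ◁`, `r = ▷`):
a pre-Novikov algebra and a pre-Novikov coalgebra satisfying the eight
compatibility conditions. -/
def IsPreNovikovBialgebra (l r : A →ₗ[k] A →ₗ[k] A) (α β : A →ₗ[k] A ⊗[k] A) : Prop :=
  IsPreNovikov l r ∧ IsPreNovikovCoalgebra α β ∧
  (∀ a b : A,
    tau2 (α ((l + r) a b)) + β ((l + r) a b)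
      = TensorProduct.map (r a + 2 • l.flip a) LinearMap.id (tau2 (α b) + β b)
        + TensorProduct.map LinearMap.id ((l + r) a) (tau2 (α b) + β b)
        + TensorProduct.map LinearMap.id ((l + r).flip b) (2 • tau2 (α a) + β a)
        - TensorProduct.map (l.flip b) LinearMap.id (tau2 (α a))) ∧
  (∀ a b : A,
    tau2 (α ((l + r) a b - (l + r) b a))
      = TensorProduct.map (r a + l.flip a) LinearMap.id (tau2 (α b))
        + TensorProduct.map LinearMap.id ((l + r) a) (tau2 (α b))
        - TensorProduct.map (r b + l.flip b) LinearMap.id (tau2 (α a))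
        - TensorProduct.map LinearMap.id ((l + r) b) (tau2 (α a))) ∧
  (∀ a b : A,
    α (r a b + l b a) + β (r a b + l b a)
      = TensorProduct.map LinearMap.id (r.flip b + l b) (2 • tau2 (α a) + β a)
        - TensorProduct.map (l b) LinearMap.id (α a)
        + TensorProduct.map (r a + 2 • l.flip a) LinearMap.id (α b + β b)
        + TensorProduct.map LinearMap.id (r a + l.flip a) (α b + β b)) ∧
  (∀ a b : A,
    α (l b a) + β (l b a) - tau2 (α (l b a)) - tau2 (β (l b a))
      = TensorProduct.map LinearMap.id (l b) (tau2 (α a) + β a)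
        - TensorProduct.map (l b) LinearMap.id (α a + tau2 (β a))
        + TensorProduct.map LinearMap.id (l.flip a) (α b + β b)
        - TensorProduct.map (l.flip a) LinearMap.id (tau2 (α b) + tau2 (β b))) ∧
  (∀ a b : A,
    TensorProduct.map LinearMap.id ((l + r).flip b) (tau2 (α a) + β a)
        - TensorProduct.map (l.flip b) LinearMap.id (tau2 (α a) + β a)
      = TensorProduct.map LinearMap.id ((l + r).flip a) (tau2 (α b) + β b)
        - TensorProduct.map (l.flip a) LinearMap.id (tau2 (α b) + β b)) ∧
  (∀ a b : A,
    tau2 (α ((l + r) a b))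
      = TensorProduct.map LinearMap.id ((l + r).flip b) (tau2 (α a))
        + TensorProduct.map (r a + l.flip a) LinearMap.id (tau2 (α b) + β b)) ∧
  (∀ a b : A,
    TensorProduct.map LinearMap.id (r.flip b + l b) (tau2 (α a))
      = TensorProduct.map (r.flip b + l b) LinearMap.id (α a)
        + TensorProduct.map LinearMap.id (r a + l.flip a) (tau2 (α b) + tau2 (β b))
        - TensorProduct.map (r a + l.flip a) LinearMap.id (α b + β b)) ∧
  (∀ a b : A,
    α (l b a) + β (l b a)
      = TensorProduct.map LinearMap.id (r.flip b + l b) (tau2 (α a) + β a)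
        + TensorProduct.map (l.flip a) LinearMap.id (α b + β b))

/-- A pre-Lie bialgebra `(L, ∘, δ)`. -/
def IsPreLieBialgebra (op : A →ₗ[k] A →ₗ[k] A) (δ : A →ₗ[k] A ⊗[k] A) : Prop :=
  IsPreLie op ∧ IsPreLieCoalgebra δ ∧
  (∀ a b : A,
    (δ (op a b) - tau2 (δ (op a b)))
      - TensorProduct.map (op a) LinearMap.id (δ b - tau2 (δ b))
      - TensorProduct.map LinearMap.id (op a) (δ b - tau2 (δ b))
      - TensorProduct.map LinearMap.id (op.flip b) (δ a)
      + TensorProduct.map (op.flip b) LinearMap.id (tau2 (δ a)) = 0) ∧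
  (∀ a b : A,
    δ (op a b - op b a)
      - TensorProduct.map LinearMap.id (op.flip b - op b) (δ a)
      - TensorProduct.map LinearMap.id (op a - op.flip a) (δ b)
      - TensorProduct.map (op a) LinearMap.id (δ b)
      + TensorProduct.map (op b) LinearMap.id (δ a) = 0)

end BiDefs
section YBE
variable {A : Type*} [AddCommGroup A] [Module k A]

/-- `(x⊗y)⊗(x'⊗y') ↦ μ(x,x') ⊗ y ⊗ y'` (the "12·13" product). -/
def m1213 (μ : A →ₗ[k] A →ₗ[k] A) :
    (A ⊗[k] A) ⊗[k] (A ⊗[k] A) →ₗ[k] A ⊗[k] (A ⊗[k] A) :=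
  TensorProduct.map (TensorProduct.lift μ) LinearMap.id ∘ₗ
    (TensorProduct.tensorTensorTensorComm k A A A A).toLinearMap

/-- `(x⊗y)⊗(x'⊗y') ↦ x ⊗ μ(y,x') ⊗ y'` (the "12·23" product). -/
def m1223 (μ : A →ₗ[k] A →ₗ[k] A) :
    (A ⊗[k] A) ⊗[k] (A ⊗[k] A) →ₗ[k] A ⊗[k] (A ⊗[k] A) :=
  TensorProduct.map LinearMap.id
      (TensorProduct.map (TensorProduct.lift μ) LinearMap.id ∘ₗ
        (TensorProduct.assoc k A A A).symm.toLinearMap) ∘ₗ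
    (TensorProduct.assoc k A A (A ⊗[k] A)).toLinearMap

/-- `(x⊗y)⊗(x'⊗y') ↦ x ⊗ x' ⊗ μ(y,y')` (the "13·23" product). -/
def m1323 (μ : A →ₗ[k] A →ₗ[k] A) :
    (A ⊗[k] A) ⊗[k] (A ⊗[k] A) →ₗ[k] A ⊗[k] (A ⊗[k] A) :=
  (TensorProduct.assoc k A A A).toLinearMap ∘ₗ
    TensorProduct.map LinearMap.id (TensorProduct.lift μ) ∘ₗ
    (TensorProduct.tensorTensorTensorComm k A A A A).toLinearMap

/-- `(x⊗y)⊗(x'⊗y') ↦ x' ⊗ x ⊗ μ(y,y')` (the "23·13" product). -/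
def m2313 (μ : A →ₗ[k] A →ₗ[k] A) :
    (A ⊗[k] A) ⊗[k] (A ⊗[k] A) →ₗ[k] A ⊗[k] (A ⊗[k] A) :=
  (TensorProduct.assoc k A A A).toLinearMap ∘ₗ
    TensorProduct.map (TensorProduct.comm k A A).toLinearMap (TensorProduct.lift μ) ∘ₗ
    (TensorProduct.tensorTensorTensorComm k A A A A).toLinearMap

/-- `ρ` is a solution of the pre-Novikov Yang–Baxter equation
`r₁₂∘r₁₃ + r₂₃⊙r₁₃ − r₁₂◁r₂₃ = 0` in the pre-Novikov algebra `(A, l, r)`,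
where `a∘b = a◁b + a▷b` and `a⊙b = a▷b + b◁a`. -/
def IsPNYBESolution (l r : A →ₗ[k] A →ₗ[k] A) (ρ : A ⊗[k] A) : Prop :=
  m1213 (l + r) (ρ ⊗ₜ[k] ρ) + m2313 (r + l.flip) (ρ ⊗ₜ[k] ρ) - m1223 l (ρ ⊗ₜ[k] ρ) = 0

/-- `ρ` is a solution of the S-equation `−r₁₂∘r₁₃ + r₁₂∘r₂₃ + [r₁₃, r₂₃] = 0`
in the pre-Lie algebra `(A, op)`. -/
def IsSEquationSolution (op : A →ₗ[k] A →ₗ[k] A) (ρ : A ⊗[k] A) : Prop :=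
  - m1213 op (ρ ⊗ₜ[k] ρ) + m1223 op (ρ ⊗ₜ[k] ρ) + m1323 (op - op.flip) (ρ ⊗ₜ[k] ρ) = 0

end YBE

section EvalLemmas
variable {k : Type*} [Field k] {A : Type*} [AddCommGroup A] [Module k A]

lemma tau2_tmul (u v : A) : (tau2 (u ⊗ₜ[k] v)) = v ⊗ₜ[k] u := by simp [tau2]

lemma swap12_tmul (a b c : A) : (swap12 (a ⊗ₜ[k] (b ⊗ₜ[k] c))) = b ⊗ₜ[k] (a ⊗ₜ[k] c) := by
  simp [swap12]

lemma swap23_tmul (a b c : A) : (swap23 (a ⊗ₜ[k] (b ⊗ₜ[k] c))) = a ⊗ₜ[k] (c ⊗ₜ[k] b) := by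
  simp [swap23]

lemma m1213_tmul (μ : A →ₗ[k] A →ₗ[k] A) (u v w z : A) :
    m1213 μ ((u ⊗ₜ[k] v) ⊗ₜ[k] (w ⊗ₜ[k] z)) = (μ u w) ⊗ₜ[k] (v ⊗ₜ[k] z) := by
  simp [m1213]

lemma m1223_tmul (μ : A →ₗ[k] A →ₗ[k] A) (u v w z : A) :
    m1223 μ ((u ⊗ₜ[k] v) ⊗ₜ[k] (w ⊗ₜ[k] z)) = u ⊗ₜ[k] ((μ v w) ⊗ₜ[k] z) := by
  simp [m1223]

lemma m1323_tmul (μ : A →ₗ[k] A →ₗ[k] A) (u v w z : A) :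
    m1323 μ ((u ⊗ₜ[k] v) ⊗ₜ[k] (w ⊗ₜ[k] z)) = u ⊗ₜ[k] (w ⊗ₜ[k] (μ v z)) := by
  simp [m1323]

lemma m2313_tmul (μ : A →ₗ[k] A →ₗ[k] A) (u v w z : A) :
    m2313 μ ((u ⊗ₜ[k] v) ⊗ₜ[k] (w ⊗ₜ[k] z)) = w ⊗ₜ[k] (u ⊗ₜ[k] (μ v z)) := by
  simp [m2313]

lemma rmap3_tmul (f : A →ₗ[k] A ⊗[k] A) (u v : A) :
    rmap3 f (u ⊗ₜ[k] v) = u ⊗ₜ[k] (f v) := by simp [rmap3]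

lemma lmap3_tmul (f : A →ₗ[k] A ⊗[k] A) (u v : A) :
    lmap3 f (u ⊗ₜ[k] v) = (TensorProduct.assoc k A A A) ((f u) ⊗ₜ[k] v) := by simp [lmap3]

end EvalLemmas
lemma cancel_two {k : Type*} [Field k] [CharZero k] {M : Type*} [AddCommGroup M]
    [Module k M] (c : M) (h : c + c = 0) : c = 0 := by
  have h2 : (2:k) • c = 0 := by rw [two_smul]; exact h
  rcases smul_eq_zero.mp h2 with h'|h'
  · exact absurd h' (by norm_num)
  · exact h'

lemma cancel_eight {k : Type*} [Field k] [CharZero k] {M : Type*} [AddCommGroup M]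
    [Module k M] (c : M) (h : c + c + c + c + c + c + c + c = 0) : c = 0 := by
  have h8 : (8:k) • c = 0 := by
    have hn : ((8:ℕ):k) • c = (8:ℕ) • c := Nat.cast_smul_eq_nsmul k 8 c
    rw [show ((8:ℕ):k) = (8:k) by norm_num] at hn
    rw [hn, show (8:ℕ) • c = c + c + c + c + c + c + c + c by abel]
    exact h
  rcases smul_eq_zero.mp h8 with h'|h'
  · exact absurd h' (by norm_num)
  · exact h'
set_option maxHeartbeats 0 in
set_option maxRecDepth 16000 in
/-- A symmetric solution `r` of the S-equation in a pre-Lie algebra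
`(L, ∘)` induces, via `δ(a) := (L∘(a)⊗id + id⊗(L∘(a)−R∘(a)))(r)`, a pre-Lie
bialgebra `(L, ∘, δ)`. -/
theorem preLie_bialgebra_of_sEquation (k L : Type*) [Field k] [CharZero k]
    [AddCommGroup L] [Module k L]
    (op : L →ₗ[k] L →ₗ[k] L) (hpl : IsPreLie op)
    (ρ : L ⊗[k] L) (hsym : tau2 ρ = ρ) (hS : IsSEquationSolution op ρ)
    (δ : L →ₗ[k] L ⊗[k] L)
    (hδ : ∀ a : L, δ a = TensorProduct.map (op a) LinearMap.id ρ
        + TensorProduct.map LinearMap.id (op a - op.flip a) ρ) :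
    IsPreLieBialgebra op δ := by
  refine ⟨hpl, ?_, ?_, ?_⟩
  · intro a
    have eA : ∀ (μ : L →ₗ[k] L →ₗ[k] L) (u v : L) (t : L ⊗[k] L),
        m1223 μ ((u ⊗ₜ[k] v) ⊗ₜ[k] t) = u ⊗ₜ[k] (TensorProduct.map (μ v) LinearMap.id t) := by
      intro μ u v t
      induction t using TensorProduct.induction_on with
      | zero => simp
      | tmul w z => simp [m1223_tmul]
      | add t1 t2 h1 h2 =>
        simp only [tmul_add, map_add, h1, h2]
    have eB : ∀ (μ : L →ₗ[k] L →ₗ[k] L) (u v : L) (t : L ⊗[k] L),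
        m1323 μ ((u ⊗ₜ[k] v) ⊗ₜ[k] t) = u ⊗ₜ[k] (TensorProduct.map LinearMap.id (μ v) t) := by
      intro μ u v t
      induction t using TensorProduct.induction_on with
      | zero => simp
      | tmul w z => simp [m1323_tmul]
      | add t1 t2 h1 h2 =>
        simp only [tmul_add, map_add, h1, h2]
    have eC : ∀ (μ : L →ₗ[k] L →ₗ[k] L) (u v : L) (t : L ⊗[k] L),
        swap23 (m1213 μ ((u ⊗ₜ[k] v) ⊗ₜ[k] t))
          = (TensorProduct.assoc k L L L) ((TensorProduct.map (μ u) LinearMap.id t) ⊗ₜ[k] v) := by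
      intro μ u v t
      induction t using TensorProduct.induction_on with
      | zero => simp
      | tmul w z => simp [m1213_tmul, swap23_tmul]
      | add t1 t2 h1 h2 =>
        simp only [tmul_add, map_add, add_tmul, h1, h2]
    have eD : ∀ (μ : L →ₗ[k] L →ₗ[k] L) (u v : L) (t : L ⊗[k] L),
        swap23 (m2313 μ ((v ⊗ₜ[k] u) ⊗ₜ[k] t))
          = (TensorProduct.assoc k L L L) ((TensorProduct.map LinearMap.id (μ u) t) ⊗ₜ[k] v) := by
      intro μ u v t
      induction t using TensorProduct.induction_on with
      | zero => simp
      | tmul w z => simp [m2313_tmul, swap23_tmul]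
      | add t1 t2 h1 h2 =>
        simp only [tmul_add, map_add, add_tmul, h1, h2]
    have bR : ∀ s : L ⊗[k] L, rmap3 δ s
        = m1223 op (s ⊗ₜ[k] ρ) + m1323 (op - op.flip) (s ⊗ₜ[k] ρ) := by
      intro s
      induction s using TensorProduct.induction_on with
      | zero => simp
      | tmul u v =>
        rw [rmap3_tmul, hδ v, eA op u v ρ, eB (op - op.flip) u v ρ, LinearMap.sub_apply,
          tmul_add]
      | add s1 s2 h1 h2 =>
        simp only [map_add, add_tmul, h1, h2]
        abel
    have bL : ∀ s : L ⊗[k] L, lmap3 δ s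
        = swap23 (m1213 op (s ⊗ₜ[k] ρ))
          + swap23 (m2313 (op - op.flip) (tau2 s ⊗ₜ[k] ρ)) := by
      intro s
      induction s using TensorProduct.induction_on with
      | zero => simp
      | tmul u v =>
        rw [lmap3_tmul, hδ u, tau2_tmul, eC op u v ρ, eD (op - op.flip) u v ρ,
          LinearMap.sub_apply, add_tmul, map_add]
      | add s1 s2 h1 h2 =>
        simp only [map_add, add_tmul, h1, h2]
        abel
    have hS' : - m1213 op (ρ ⊗ₜ[k] ρ) + m1223 op (ρ ⊗ₜ[k] ρ)
        + m1323 (op - op.flip) (ρ ⊗ₜ[k] ρ) = 0 := hS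
    have hkeymap : (((((m1223 op + m1323 (op - op.flip)) - swap12 ∘ₗ (m1223 op + m1323 (op - op.flip))) - ((swap23 ∘ₗ m1213 op + swap23 ∘ₗ m2313 (op - op.flip) ∘ₗ TensorProduct.map tau2 LinearMap.id) - swap12 ∘ₗ (swap23 ∘ₗ m1213 op + swap23 ∘ₗ m2313 (op - op.flip) ∘ₗ TensorProduct.map tau2 LinearMap.id))) ∘ₗ TensorProduct.map ((TensorProduct.map (op a) LinearMap.id + TensorProduct.map LinearMap.id (op a - op.flip a))) LinearMap.id) - ((TensorProduct.map (op a) LinearMap.id ∘ₗ (- m1213 op + m1223 op + m1323 (op - op.flip))) - swap12 ∘ₗ (TensorProduct.map (op a) LinearMap.id ∘ₗ (- m1213 op + m1223 op + m1323 (op - op.flip))) - swap23 ∘ₗ swap12 ∘ₗ (TensorProduct.map (op a) LinearMap.id ∘ₗ (- m1213 op + m1223 op + m1323 (op - op.flip))) + swap12 ∘ₗ swap23 ∘ₗ swap12 ∘ₗ (TensorProduct.map (op a) LinearMap.id ∘ₗ (- m1213 op + m1223 op + m1323 (op - op.flip))) + swap23 ∘ₗ swap12 ∘ₗ (TensorProduct.map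 (op.flip a) LinearMap.id ∘ₗ (- m1213 op + m1223 op + m1323 (op - op.flip))) - swap12 ∘ₗ swap23 ∘ₗ swap12 ∘ₗ (TensorProduct.map (op.flip a) LinearMap.id ∘ₗ (- m1213 op + m1223 op + m1323 (op - op.flip))))) ∘ₗ (LinearMap.id + TensorProduct.map tau2 LinearMap.id + TensorProduct.map LinearMap.id tau2 + TensorProduct.map tau2 tau2 + (TensorProduct.comm k (L ⊗[k] L) (L ⊗[k] L)).toLinearMap + (TensorProduct.comm k (L ⊗[k] L) (L ⊗[k] L)).toLinearMap ∘ₗ TensorProduct.map tau2 LinearMap.id + (TensorProduct.comm k (L ⊗[k] L) (L ⊗[k] L)).toLinearMap ∘ₗ TensorProduct.map LinearMap.id tau2 + (TensorProduct.comm k (L ⊗[k] L) (L ⊗[k] L)).toLinearMap ∘ₗ TensorProduct.map tau2 tau2)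
        = (0 : (L ⊗[k] L) ⊗[k] (L ⊗[k] L) →ₗ[k] L ⊗[k] (L ⊗[k] L)) := by
      apply TensorProduct.ext'
      intro sx tx
      rw [LinearMap.zero_apply]
      induction sx using TensorProduct.induction_on with
      | zero => simp
      | tmul u v =>
        induction tx using TensorProduct.induction_on with
        | zero => simp
        | tmul w z =>
          simp only [LinearMap.comp_apply, LinearMap.add_apply, LinearMap.sub_apply,
            LinearMap.neg_apply, LinearEquiv.coe_coe, TensorProduct.comm_tmul, TensorProduct.map_tmul, LinearMap.id_coe, id_eq, tau2_tmul, swap12_tmul, swap23_tmul, m1213_tmul, m1223_tmul, m1323_tmul, m2313_tmul, LinearMap.sub_apply, LinearMap.flip_apply, add_tmul, tmul_add, sub_tmul, tmul_sub, map_add, map_sub, map_neg, neg_tmul, tmul_neg, TensorProduct.assoc_tmul]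
          have H1 : (op (op u a) w) ⊗ₜ[k] (v ⊗ₜ[k] z) - (op u (op a w)) ⊗ₜ[k] (v ⊗ₜ[k] z) = (op (op a u) w) ⊗ₜ[k] (v ⊗ₜ[k] z) - (op a (op u w)) ⊗ₜ[k] (v ⊗ₜ[k] z) := by rw [← sub_tmul, ← sub_tmul, hpl u a w]
          have H2 : v ⊗ₜ[k] ((op (op u a) w) ⊗ₜ[k] z) - v ⊗ₜ[k] ((op u (op a w)) ⊗ₜ[k] z) = v ⊗ₜ[k] ((op (op a u) w) ⊗ₜ[k] z) - v ⊗ₜ[k] ((op a (op u w)) ⊗ₜ[k] z) := by rw [← tmul_sub, ← sub_tmul, ← tmul_sub, ← sub_tmul, hpl u a w]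
          have H3 : v ⊗ₜ[k] (z ⊗ₜ[k] (op (op u a) w)) - v ⊗ₜ[k] (z ⊗ₜ[k] (op u (op a w))) = v ⊗ₜ[k] (z ⊗ₜ[k] (op (op a u) w)) - v ⊗ₜ[k] (z ⊗ₜ[k] (op a (op u w))) := by rw [← tmul_sub, ← tmul_sub, ← tmul_sub, ← tmul_sub, hpl u a w]
          have H4 : z ⊗ₜ[k] (v ⊗ₜ[k] (op (op u a) w)) - z ⊗ₜ[k] (v ⊗ₜ[k] (op u (op a w))) = z ⊗ₜ[k] (v ⊗ₜ[k] (op (op a u) w)) - z ⊗ₜ[k] (v ⊗ₜ[k] (op a (op u w))) := by rw [← tmul_sub, ← tmul_sub, ← tmul_sub, ← tmul_sub, hpl u a w]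
          have H5 : v ⊗ₜ[k] (z ⊗ₜ[k] (op (op u w) a)) - v ⊗ₜ[k] (z ⊗ₜ[k] (op u (op w a))) = v ⊗ₜ[k] (z ⊗ₜ[k] (op (op w u) a)) - v ⊗ₜ[k] (z ⊗ₜ[k] (op w (op u a))) := by rw [← tmul_sub, ← tmul_sub, ← tmul_sub, ← tmul_sub, hpl u w a]
          have H6 : z ⊗ₜ[k] (v ⊗ₜ[k] (op (op u w) a)) - z ⊗ₜ[k] (v ⊗ₜ[k] (op u (op w a))) = z ⊗ₜ[k] (v ⊗ₜ[k] (op (op w u) a)) - z ⊗ₜ[k] (v ⊗ₜ[k] (op w (op u a))) := by rw [← tmul_sub, ← tmul_sub, ← tmul_sub, ← tmul_sub, hpl u w a]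
          have H7 : (op (op w a) u) ⊗ₜ[k] (z ⊗ₜ[k] v) - (op w (op a u)) ⊗ₜ[k] (z ⊗ₜ[k] v) = (op (op a w) u) ⊗ₜ[k] (z ⊗ₜ[k] v) - (op a (op w u)) ⊗ₜ[k] (z ⊗ₜ[k] v) := by rw [← sub_tmul, ← sub_tmul, hpl w a u]
          have H8 : z ⊗ₜ[k] ((op (op w a) u) ⊗ₜ[k] v) - z ⊗ₜ[k] ((op w (op a u)) ⊗ₜ[k] v) = z ⊗ₜ[k] ((op (op a w) u) ⊗ₜ[k] v) - z ⊗ₜ[k] ((op a (op w u)) ⊗ₜ[k] v) := by rw [← tmul_sub, ← sub_tmul, ← tmul_sub, ← sub_tmul, hpl w a u]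
          have H9 : v ⊗ₜ[k] (z ⊗ₜ[k] (op (op w a) u)) - v ⊗ₜ[k] (z ⊗ₜ[k] (op w (op a u))) = v ⊗ₜ[k] (z ⊗ₜ[k] (op (op a w) u)) - v ⊗ₜ[k] (z ⊗ₜ[k] (op a (op w u))) := by rw [← tmul_sub, ← tmul_sub, ← tmul_sub, ← tmul_sub, hpl w a u]
          have H10 : z ⊗ₜ[k] (v ⊗ₜ[k] (op (op w a) u)) - z ⊗ₜ[k] (v ⊗ₜ[k] (op w (op a u))) = z ⊗ₜ[k] (v ⊗ₜ[k] (op (op a w) u)) - z ⊗ₜ[k] (v ⊗ₜ[k] (op a (op w u))) := by rw [← tmul_sub, ← tmul_sub, ← tmul_sub, ← tmul_sub, hpl w a u]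
          have H11 : (op (op u a) z) ⊗ₜ[k] (v ⊗ₜ[k] w) - (op u (op a z)) ⊗ₜ[k] (v ⊗ₜ[k] w) = (op (op a u) z) ⊗ₜ[k] (v ⊗ₜ[k] w) - (op a (op u z)) ⊗ₜ[k] (v ⊗ₜ[k] w) := by rw [← sub_tmul, ← sub_tmul, hpl u a z]
          have H12 : v ⊗ₜ[k] ((op (op u a) z) ⊗ₜ[k] w) - v ⊗ₜ[k] ((op u (op a z)) ⊗ₜ[k] w) = v ⊗ₜ[k] ((op (op a u) z) ⊗ₜ[k] w) - v ⊗ₜ[k] ((op a (op u z)) ⊗ₜ[k] w) := by rw [← tmul_sub, ← sub_tmul, ← tmul_sub, ← sub_tmul, hpl u a z]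
          have H13 : v ⊗ₜ[k] (w ⊗ₜ[k] (op (op u a) z)) - v ⊗ₜ[k] (w ⊗ₜ[k] (op u (op a z))) = v ⊗ₜ[k] (w ⊗ₜ[k] (op (op a u) z)) - v ⊗ₜ[k] (w ⊗ₜ[k] (op a (op u z))) := by rw [← tmul_sub, ← tmul_sub, ← tmul_sub, ← tmul_sub, hpl u a z]
          have H14 : w ⊗ₜ[k] (v ⊗ₜ[k] (op (op u a) z)) - w ⊗ₜ[k] (v ⊗ₜ[k] (op u (op a z))) = w ⊗ₜ[k] (v ⊗ₜ[k] (op (op a u) z)) - w ⊗ₜ[k] (v ⊗ₜ[k] (op a (op u z))) := by rw [← tmul_sub, ← tmul_sub, ← tmul_sub, ← tmul_sub, hpl u a z]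
          have H15 : v ⊗ₜ[k] (w ⊗ₜ[k] (op (op u z) a)) - v ⊗ₜ[k] (w ⊗ₜ[k] (op u (op z a))) = v ⊗ₜ[k] (w ⊗ₜ[k] (op (op z u) a)) - v ⊗ₜ[k] (w ⊗ₜ[k] (op z (op u a))) := by rw [← tmul_sub, ← tmul_sub, ← tmul_sub, ← tmul_sub, hpl u z a]
          have H16 : w ⊗ₜ[k] (v ⊗ₜ[k] (op (op u z) a)) - w ⊗ₜ[k] (v ⊗ₜ[k] (op u (op z a))) = w ⊗ₜ[k] (v ⊗ₜ[k] (op (op z u) a)) - w ⊗ₜ[k] (v ⊗ₜ[k] (op z (op u a))) := by rw [← tmul_sub, ← tmul_sub, ← tmul_sub, ← tmul_sub, hpl u z a]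
          have H17 : (op (op z a) u) ⊗ₜ[k] (w ⊗ₜ[k] v) - (op z (op a u)) ⊗ₜ[k] (w ⊗ₜ[k] v) = (op (op a z) u) ⊗ₜ[k] (w ⊗ₜ[k] v) - (op a (op z u)) ⊗ₜ[k] (w ⊗ₜ[k] v) := by rw [← sub_tmul, ← sub_tmul, hpl z a u]
          have H18 : w ⊗ₜ[k] ((op (op z a) u) ⊗ₜ[k] v) - w ⊗ₜ[k] ((op z (op a u)) ⊗ₜ[k] v) = w ⊗ₜ[k] ((op (op a z) u) ⊗ₜ[k] v) - w ⊗ₜ[k] ((op a (op z u)) ⊗ₜ[k] v) := by rw [← tmul_sub, ← sub_tmul, ← tmul_sub, ← sub_tmul, hpl z a u]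
          have H19 : v ⊗ₜ[k] (w ⊗ₜ[k] (op (op z a) u)) - v ⊗ₜ[k] (w ⊗ₜ[k] (op z (op a u))) = v ⊗ₜ[k] (w ⊗ₜ[k] (op (op a z) u)) - v ⊗ₜ[k] (w ⊗ₜ[k] (op a (op z u))) := by rw [← tmul_sub, ← tmul_sub, ← tmul_sub, ← tmul_sub, hpl z a u]
          have H20 : w ⊗ₜ[k] (v ⊗ₜ[k] (op (op z a) u)) - w ⊗ₜ[k] (v ⊗ₜ[k] (op z (op a u))) = w ⊗ₜ[k] (v ⊗ₜ[k] (op (op a z) u)) - w ⊗ₜ[k] (v ⊗ₜ[k] (op a (op z u))) := by rw [← tmul_sub, ← tmul_sub, ← tmul_sub, ← tmul_sub, hpl z a u]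
          have H21 : (op (op v a) w) ⊗ₜ[k] (u ⊗ₜ[k] z) - (op v (op a w)) ⊗ₜ[k] (u ⊗ₜ[k] z) = (op (op a v) w) ⊗ₜ[k] (u ⊗ₜ[k] z) - (op a (op v w)) ⊗ₜ[k] (u ⊗ₜ[k] z) := by rw [← sub_tmul, ← sub_tmul, hpl v a w]
          have H22 : u ⊗ₜ[k] ((op (op v a) w) ⊗ₜ[k] z) - u ⊗ₜ[k] ((op v (op a w)) ⊗ₜ[k] z) = u ⊗ₜ[k] ((op (op a v) w) ⊗ₜ[k] z) - u ⊗ₜ[k] ((op a (op v w)) ⊗ₜ[k] z) := by rw [← tmul_sub, ← sub_tmul, ← tmul_sub, ← sub_tmul, hpl v a w]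
          have H23 : u ⊗ₜ[k] (z ⊗ₜ[k] (op (op v a) w)) - u ⊗ₜ[k] (z ⊗ₜ[k] (op v (op a w))) = u ⊗ₜ[k] (z ⊗ₜ[k] (op (op a v) w)) - u ⊗ₜ[k] (z ⊗ₜ[k] (op a (op v w))) := by rw [← tmul_sub, ← tmul_sub, ← tmul_sub, ← tmul_sub, hpl v a w]
          have H24 : z ⊗ₜ[k] (u ⊗ₜ[k] (op (op v a) w)) - z ⊗ₜ[k] (u ⊗ₜ[k] (op v (op a w))) = z ⊗ₜ[k] (u ⊗ₜ[k] (op (op a v) w)) - z ⊗ₜ[k] (u ⊗ₜ[k] (op a (op v w))) := by rw [← tmul_sub, ← tmul_sub, ← tmul_sub, ← tmul_sub, hpl v a w]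
          have H25 : u ⊗ₜ[k] (z ⊗ₜ[k] (op (op v w) a)) - u ⊗ₜ[k] (z ⊗ₜ[k] (op v (op w a))) = u ⊗ₜ[k] (z ⊗ₜ[k] (op (op w v) a)) - u ⊗ₜ[k] (z ⊗ₜ[k] (op w (op v a))) := by rw [← tmul_sub, ← tmul_sub, ← tmul_sub, ← tmul_sub, hpl v w a]
          have H26 : z ⊗ₜ[k] (u ⊗ₜ[k] (op (op v w) a)) - z ⊗ₜ[k] (u ⊗ₜ[k] (op v (op w a))) = z ⊗ₜ[k] (u ⊗ₜ[k] (op (op w v) a)) - z ⊗ₜ[k] (u ⊗ₜ[k] (op w (op v a))) := by rw [← tmul_sub, ← tmul_sub, ← tmul_sub, ← tmul_sub, hpl v w a]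
          have H27 : (op (op w a) v) ⊗ₜ[k] (z ⊗ₜ[k] u) - (op w (op a v)) ⊗ₜ[k] (z ⊗ₜ[k] u) = (op (op a w) v) ⊗ₜ[k] (z ⊗ₜ[k] u) - (op a (op w v)) ⊗ₜ[k] (z ⊗ₜ[k] u) := by rw [← sub_tmul, ← sub_tmul, hpl w a v]
          have H28 : z ⊗ₜ[k] ((op (op w a) v) ⊗ₜ[k] u) - z ⊗ₜ[k] ((op w (op a v)) ⊗ₜ[k] u) = z ⊗ₜ[k] ((op (op a w) v) ⊗ₜ[k] u) - z ⊗ₜ[k] ((op a (op w v)) ⊗ₜ[k] u) := by rw [← tmul_sub, ← sub_tmul, ← tmul_sub, ← sub_tmul, hpl w a v]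
          have H29 : u ⊗ₜ[k] (z ⊗ₜ[k] (op (op w a) v)) - u ⊗ₜ[k] (z ⊗ₜ[k] (op w (op a v))) = u ⊗ₜ[k] (z ⊗ₜ[k] (op (op a w) v)) - u ⊗ₜ[k] (z ⊗ₜ[k] (op a (op w v))) := by rw [← tmul_sub, ← tmul_sub, ← tmul_sub, ← tmul_sub, hpl w a v]
          have H30 : z ⊗ₜ[k] (u ⊗ₜ[k] (op (op w a) v)) - z ⊗ₜ[k] (u ⊗ₜ[k] (op w (op a v))) = z ⊗ₜ[k] (u ⊗ₜ[k] (op (op a w) v)) - z ⊗ₜ[k] (u ⊗ₜ[k] (op a (op w v))) := by rw [← tmul_sub, ← tmul_sub, ← tmul_sub, ← tmul_sub, hpl w a v]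
          have H31 : (op (op v a) z) ⊗ₜ[k] (u ⊗ₜ[k] w) - (op v (op a z)) ⊗ₜ[k] (u ⊗ₜ[k] w) = (op (op a v) z) ⊗ₜ[k] (u ⊗ₜ[k] w) - (op a (op v z)) ⊗ₜ[k] (u ⊗ₜ[k] w) := by rw [← sub_tmul, ← sub_tmul, hpl v a z]
          have H32 : u ⊗ₜ[k] ((op (op v a) z) ⊗ₜ[k] w) - u ⊗ₜ[k] ((op v (op a z)) ⊗ₜ[k] w) = u ⊗ₜ[k] ((op (op a v) z) ⊗ₜ[k] w) - u ⊗ₜ[k] ((op a (op v z)) ⊗ₜ[k] w) := by rw [← tmul_sub, ← sub_tmul, ← tmul_sub, ← sub_tmul, hpl v a z]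
          have H33 : u ⊗ₜ[k] (w ⊗ₜ[k] (op (op v a) z)) - u ⊗ₜ[k] (w ⊗ₜ[k] (op v (op a z))) = u ⊗ₜ[k] (w ⊗ₜ[k] (op (op a v) z)) - u ⊗ₜ[k] (w ⊗ₜ[k] (op a (op v z))) := by rw [← tmul_sub, ← tmul_sub, ← tmul_sub, ← tmul_sub, hpl v a z]
          have H34 : w ⊗ₜ[k] (u ⊗ₜ[k] (op (op v a) z)) - w ⊗ₜ[k] (u ⊗ₜ[k] (op v (op a z))) = w ⊗ₜ[k] (u ⊗ₜ[k] (op (op a v) z)) - w ⊗ₜ[k] (u ⊗ₜ[k] (op a (op v z))) := by rw [← tmul_sub, ← tmul_sub, ← tmul_sub, ← tmul_sub, hpl v a z]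
          have H35 : u ⊗ₜ[k] (w ⊗ₜ[k] (op (op v z) a)) - u ⊗ₜ[k] (w ⊗ₜ[k] (op v (op z a))) = u ⊗ₜ[k] (w ⊗ₜ[k] (op (op z v) a)) - u ⊗ₜ[k] (w ⊗ₜ[k] (op z (op v a))) := by rw [← tmul_sub, ← tmul_sub, ← tmul_sub, ← tmul_sub, hpl v z a]
          have H36 : w ⊗ₜ[k] (u ⊗ₜ[k] (op (op v z) a)) - w ⊗ₜ[k] (u ⊗ₜ[k] (op v (op z a))) = w ⊗ₜ[k] (u ⊗ₜ[k] (op (op z v) a)) - w ⊗ₜ[k] (u ⊗ₜ[k] (op z (op v a))) := by rw [← tmul_sub, ← tmul_sub, ← tmul_sub, ← tmul_sub, hpl v z a]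
          have H37 : (op (op z a) v) ⊗ₜ[k] (w ⊗ₜ[k] u) - (op z (op a v)) ⊗ₜ[k] (w ⊗ₜ[k] u) = (op (op a z) v) ⊗ₜ[k] (w ⊗ₜ[k] u) - (op a (op z v)) ⊗ₜ[k] (w ⊗ₜ[k] u) := by rw [← sub_tmul, ← sub_tmul, hpl z a v]
          have H38 : w ⊗ₜ[k] ((op (op z a) v) ⊗ₜ[k] u) - w ⊗ₜ[k] ((op z (op a v)) ⊗ₜ[k] u) = w ⊗ₜ[k] ((op (op a z) v) ⊗ₜ[k] u) - w ⊗ₜ[k] ((op a (op z v)) ⊗ₜ[k] u) := by rw [← tmul_sub, ← sub_tmul, ← tmul_sub, ← sub_tmul, hpl z a v]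
          have H39 : u ⊗ₜ[k] (w ⊗ₜ[k] (op (op z a) v)) - u ⊗ₜ[k] (w ⊗ₜ[k] (op z (op a v))) = u ⊗ₜ[k] (w ⊗ₜ[k] (op (op a z) v)) - u ⊗ₜ[k] (w ⊗ₜ[k] (op a (op z v))) := by rw [← tmul_sub, ← tmul_sub, ← tmul_sub, ← tmul_sub, hpl z a v]
          have H40 : w ⊗ₜ[k] (u ⊗ₜ[k] (op (op z a) v)) - w ⊗ₜ[k] (u ⊗ₜ[k] (op z (op a v))) = w ⊗ₜ[k] (u ⊗ₜ[k] (op (op a z) v)) - w ⊗ₜ[k] (u ⊗ₜ[k] (op a (op z v))) := by rw [← tmul_sub, ← tmul_sub, ← tmul_sub, ← tmul_sub, hpl z a v]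
          have total : (((op (op u a) w) ⊗ₜ[k] (v ⊗ₜ[k] z) - (op u (op a w)) ⊗ₜ[k] (v ⊗ₜ[k] z)) - ((op (op a u) w) ⊗ₜ[k] (v ⊗ₜ[k] z) - (op a (op u w)) ⊗ₜ[k] (v ⊗ₜ[k] z))) - ((v ⊗ₜ[k] ((op (op u a) w) ⊗ₜ[k] z) - v ⊗ₜ[k] ((op u (op a w)) ⊗ₜ[k] z)) - (v ⊗ₜ[k] ((op (op a u) w) ⊗ₜ[k] z) - v ⊗ₜ[k] ((op a (op u w)) ⊗ₜ[k] z))) - ((v ⊗ₜ[k] (z ⊗ₜ[k] (op (op u a) w)) - v ⊗ₜ[k] (z ⊗ₜ[k] (op u (op a w)))) - (v ⊗ₜ[k] (z ⊗ₜ[k] (op (op a u) w)) - v ⊗ₜ[k] (z ⊗ₜ[k] (op a (op u w))))) + ((z ⊗ₜ[k] (v ⊗ₜ[k] (op (op u a) w)) - z ⊗ₜ[k] (v ⊗ₜ[k] (op u (op a w)))) - (z ⊗ₜ[k] (v ⊗ₜ[k] (op (op a u) w)) - z ⊗ₜ[k] (v ⊗ₜ[k] (op a (op u w))))) + ((v ⊗ₜ[k]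 (z ⊗ₜ[k] (op (op u w) a)) - v ⊗ₜ[k] (z ⊗ₜ[k] (op u (op w a)))) - (v ⊗ₜ[k] (z ⊗ₜ[k] (op (op w u) a)) - v ⊗ₜ[k] (z ⊗ₜ[k] (op w (op u a))))) - ((z ⊗ₜ[k] (v ⊗ₜ[k] (op (op u w) a)) - z ⊗ₜ[k] (v ⊗ₜ[k] (op u (op w a)))) - (z ⊗ₜ[k] (v ⊗ₜ[k] (op (op w u) a)) - z ⊗ₜ[k] (v ⊗ₜ[k] (op w (op u a))))) + (((op (op w a) u) ⊗ₜ[k] (z ⊗ₜ[k] v) - (op w (op a u)) ⊗ₜ[k] (z ⊗ₜ[k] v)) - ((op (op a w) u) ⊗ₜ[k] (z ⊗ₜ[k] v) - (op a (op w u)) ⊗ₜ[k] (z ⊗ₜ[k] v))) - ((z ⊗ₜ[k] ((op (op w a) u) ⊗ₜ[k] v) - z ⊗ₜ[k] ((op w (op a u)) ⊗ₜ[k] v)) - (z ⊗ₜ[k] ((op (op a w) u) ⊗ₜ[k] v) - z ⊗ₜ[k] ((op a (op w u)) ⊗ₜ[k] v))) + ((v ⊗ₜ[k] (z ⊗ₜ[k]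 (op (op w a) u)) - v ⊗ₜ[k] (z ⊗ₜ[k] (op w (op a u)))) - (v ⊗ₜ[k] (z ⊗ₜ[k] (op (op a w) u)) - v ⊗ₜ[k] (z ⊗ₜ[k] (op a (op w u))))) - ((z ⊗ₜ[k] (v ⊗ₜ[k] (op (op w a) u)) - z ⊗ₜ[k] (v ⊗ₜ[k] (op w (op a u)))) - (z ⊗ₜ[k] (v ⊗ₜ[k] (op (op a w) u)) - z ⊗ₜ[k] (v ⊗ₜ[k] (op a (op w u))))) + (((op (op u a) z) ⊗ₜ[k] (v ⊗ₜ[k] w) - (op u (op a z)) ⊗ₜ[k] (v ⊗ₜ[k] w)) - ((op (op a u) z) ⊗ₜ[k] (v ⊗ₜ[k] w) - (op a (op u z)) ⊗ₜ[k] (v ⊗ₜ[k] w))) - ((v ⊗ₜ[k] ((op (op u a) z) ⊗ₜ[k] w) - v ⊗ₜ[k] ((op u (op a z)) ⊗ₜ[k] w)) - (v ⊗ₜ[k] ((op (op a u) z) ⊗ₜ[k] w) - v ⊗ₜ[k] ((op a (op u z)) ⊗ₜ[k] w))) - ((v ⊗ₜ[k] (w ⊗ₜ[k] (op (op u a) z))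 - v ⊗ₜ[k] (w ⊗ₜ[k] (op u (op a z)))) - (v ⊗ₜ[k] (w ⊗ₜ[k] (op (op a u) z)) - v ⊗ₜ[k] (w ⊗ₜ[k] (op a (op u z))))) + ((w ⊗ₜ[k] (v ⊗ₜ[k] (op (op u a) z)) - w ⊗ₜ[k] (v ⊗ₜ[k] (op u (op a z)))) - (w ⊗ₜ[k] (v ⊗ₜ[k] (op (op a u) z)) - w ⊗ₜ[k] (v ⊗ₜ[k] (op a (op u z))))) + ((v ⊗ₜ[k] (w ⊗ₜ[k] (op (op u z) a)) - v ⊗ₜ[k] (w ⊗ₜ[k] (op u (op z a)))) - (v ⊗ₜ[k] (w ⊗ₜ[k] (op (op z u) a)) - v ⊗ₜ[k] (w ⊗ₜ[k] (op z (op u a))))) - ((w ⊗ₜ[k] (v ⊗ₜ[k] (op (op u z) a)) - w ⊗ₜ[k] (v ⊗ₜ[k] (op u (op z a)))) - (w ⊗ₜ[k] (v ⊗ₜ[k] (op (op z u) a)) - w ⊗ₜ[k] (v ⊗ₜ[k] (op z (op u a))))) + (((op (op z a) u) ⊗ₜ[k] (w ⊗ₜ[k] v) - (op z (op a u)) ⊗ₜ[k]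 (w ⊗ₜ[k] v)) - ((op (op a z) u) ⊗ₜ[k] (w ⊗ₜ[k] v) - (op a (op z u)) ⊗ₜ[k] (w ⊗ₜ[k] v))) - ((w ⊗ₜ[k] ((op (op z a) u) ⊗ₜ[k] v) - w ⊗ₜ[k] ((op z (op a u)) ⊗ₜ[k] v)) - (w ⊗ₜ[k] ((op (op a z) u) ⊗ₜ[k] v) - w ⊗ₜ[k] ((op a (op z u)) ⊗ₜ[k] v))) + ((v ⊗ₜ[k] (w ⊗ₜ[k] (op (op z a) u)) - v ⊗ₜ[k] (w ⊗ₜ[k] (op z (op a u)))) - (v ⊗ₜ[k] (w ⊗ₜ[k] (op (op a z) u)) - v ⊗ₜ[k] (w ⊗ₜ[k] (op a (op z u))))) - ((w ⊗ₜ[k] (v ⊗ₜ[k] (op (op z a) u)) - w ⊗ₜ[k] (v ⊗ₜ[k] (op z (op a u)))) - (w ⊗ₜ[k] (v ⊗ₜ[k] (op (op a z) u)) - w ⊗ₜ[k] (v ⊗ₜ[k] (op a (op z u))))) + (((op (op v a) w) ⊗ₜ[k] (u ⊗ₜ[k] z) - (op v (op a w)) ⊗ₜ[k] (u ⊗ₜ[k]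 z)) - ((op (op a v) w) ⊗ₜ[k] (u ⊗ₜ[k] z) - (op a (op v w)) ⊗ₜ[k] (u ⊗ₜ[k] z))) - ((u ⊗ₜ[k] ((op (op v a) w) ⊗ₜ[k] z) - u ⊗ₜ[k] ((op v (op a w)) ⊗ₜ[k] z)) - (u ⊗ₜ[k] ((op (op a v) w) ⊗ₜ[k] z) - u ⊗ₜ[k] ((op a (op v w)) ⊗ₜ[k] z))) - ((u ⊗ₜ[k] (z ⊗ₜ[k] (op (op v a) w)) - u ⊗ₜ[k] (z ⊗ₜ[k] (op v (op a w)))) - (u ⊗ₜ[k] (z ⊗ₜ[k] (op (op a v) w)) - u ⊗ₜ[k] (z ⊗ₜ[k] (op a (op v w))))) + ((z ⊗ₜ[k] (u ⊗ₜ[k] (op (op v a) w)) - z ⊗ₜ[k] (u ⊗ₜ[k] (op v (op a w)))) - (z ⊗ₜ[k] (u ⊗ₜ[k] (op (op a v) w)) - z ⊗ₜ[k] (u ⊗ₜ[k] (op a (op v w))))) + ((u ⊗ₜ[k] (z ⊗ₜ[k] (op (op v w) a)) - u ⊗ₜ[k] (z ⊗ₜ[k] (op v (op w a)))) - (u ⊗ₜ[k]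 (z ⊗ₜ[k] (op (op w v) a)) - u ⊗ₜ[k] (z ⊗ₜ[k] (op w (op v a))))) - ((z ⊗ₜ[k] (u ⊗ₜ[k] (op (op v w) a)) - z ⊗ₜ[k] (u ⊗ₜ[k] (op v (op w a)))) - (z ⊗ₜ[k] (u ⊗ₜ[k] (op (op w v) a)) - z ⊗ₜ[k] (u ⊗ₜ[k] (op w (op v a))))) + (((op (op w a) v) ⊗ₜ[k] (z ⊗ₜ[k] u) - (op w (op a v)) ⊗ₜ[k] (z ⊗ₜ[k] u)) - ((op (op a w) v) ⊗ₜ[k] (z ⊗ₜ[k] u) - (op a (op w v)) ⊗ₜ[k] (z ⊗ₜ[k] u))) - ((z ⊗ₜ[k] ((op (op w a) v) ⊗ₜ[k] u) - z ⊗ₜ[k] ((op w (op a v)) ⊗ₜ[k] u)) - (z ⊗ₜ[k] ((op (op a w) v) ⊗ₜ[k] u) - z ⊗ₜ[k] ((op a (op w v)) ⊗ₜ[k] u))) + ((u ⊗ₜ[k] (z ⊗ₜ[k] (op (op w a) v)) - u ⊗ₜ[k] (z ⊗ₜ[k] (op w (op a v)))) - (u ⊗ₜ[k] (z ⊗ₜ[k]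 (op (op a w) v)) - u ⊗ₜ[k] (z ⊗ₜ[k] (op a (op w v))))) - ((z ⊗ₜ[k] (u ⊗ₜ[k] (op (op w a) v)) - z ⊗ₜ[k] (u ⊗ₜ[k] (op w (op a v)))) - (z ⊗ₜ[k] (u ⊗ₜ[k] (op (op a w) v)) - z ⊗ₜ[k] (u ⊗ₜ[k] (op a (op w v))))) + (((op (op v a) z) ⊗ₜ[k] (u ⊗ₜ[k] w) - (op v (op a z)) ⊗ₜ[k] (u ⊗ₜ[k] w)) - ((op (op a v) z) ⊗ₜ[k] (u ⊗ₜ[k] w) - (op a (op v z)) ⊗ₜ[k] (u ⊗ₜ[k] w))) - ((u ⊗ₜ[k] ((op (op v a) z) ⊗ₜ[k] w) - u ⊗ₜ[k] ((op v (op a z)) ⊗ₜ[k] w)) - (u ⊗ₜ[k] ((op (op a v) z) ⊗ₜ[k] w) - u ⊗ₜ[k] ((op a (op v z)) ⊗ₜ[k] w))) - ((u ⊗ₜ[k] (w ⊗ₜ[k] (op (op v a) z)) - u ⊗ₜ[k] (w ⊗ₜ[k] (op v (op a z)))) - (u ⊗ₜ[k] (w ⊗ₜ[k] (op (op a v) z))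 - u ⊗ₜ[k] (w ⊗ₜ[k] (op a (op v z))))) + ((w ⊗ₜ[k] (u ⊗ₜ[k] (op (op v a) z)) - w ⊗ₜ[k] (u ⊗ₜ[k] (op v (op a z)))) - (w ⊗ₜ[k] (u ⊗ₜ[k] (op (op a v) z)) - w ⊗ₜ[k] (u ⊗ₜ[k] (op a (op v z))))) + ((u ⊗ₜ[k] (w ⊗ₜ[k] (op (op v z) a)) - u ⊗ₜ[k] (w ⊗ₜ[k] (op v (op z a)))) - (u ⊗ₜ[k] (w ⊗ₜ[k] (op (op z v) a)) - u ⊗ₜ[k] (w ⊗ₜ[k] (op z (op v a))))) - ((w ⊗ₜ[k] (u ⊗ₜ[k] (op (op v z) a)) - w ⊗ₜ[k] (u ⊗ₜ[k] (op v (op z a)))) - (w ⊗ₜ[k] (u ⊗ₜ[k] (op (op z v) a)) - w ⊗ₜ[k] (u ⊗ₜ[k] (op z (op v a))))) + (((op (op z a) v) ⊗ₜ[k] (w ⊗ₜ[k] u) - (op z (op a v)) ⊗ₜ[k] (w ⊗ₜ[k] u)) - ((op (op a z) v) ⊗ₜ[k] (w ⊗ₜ[k] u) - (op a (op z v)) ⊗ₜ[k]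 (w ⊗ₜ[k] u))) - ((w ⊗ₜ[k] ((op (op z a) v) ⊗ₜ[k] u) - w ⊗ₜ[k] ((op z (op a v)) ⊗ₜ[k] u)) - (w ⊗ₜ[k] ((op (op a z) v) ⊗ₜ[k] u) - w ⊗ₜ[k] ((op a (op z v)) ⊗ₜ[k] u))) + ((u ⊗ₜ[k] (w ⊗ₜ[k] (op (op z a) v)) - u ⊗ₜ[k] (w ⊗ₜ[k] (op z (op a v)))) - (u ⊗ₜ[k] (w ⊗ₜ[k] (op (op a z) v)) - u ⊗ₜ[k] (w ⊗ₜ[k] (op a (op z v))))) - ((w ⊗ₜ[k] (u ⊗ₜ[k] (op (op z a) v)) - w ⊗ₜ[k] (u ⊗ₜ[k] (op z (op a v)))) - (w ⊗ₜ[k] (u ⊗ₜ[k] (op (op a z) v)) - w ⊗ₜ[k] (u ⊗ₜ[k] (op a (op z v))))) = (0 : L ⊗[k] (L ⊗[k] L)) := by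
            rw [H1, H2, H3, H4, H5, H6, H7, H8, H9, H10, H11, H12, H13, H14, H15, H16, H17, H18, H19, H20, H21, H22, H23, H24, H25, H26, H27, H28, H29, H30, H31, H32, H33, H34, H35, H36, H37, H38, H39, H40]; abel
          rw [← total]; abel
        | add t1 t2 h1 h2 =>
          simp only [tmul_add, map_add, h1, h2, add_zero]
      | add s1 s2 h1 h2 =>
        simp only [add_tmul, map_add, h1, h2, add_zero]
    have hSIG : ((LinearMap.id + TensorProduct.map tau2 LinearMap.id + TensorProduct.map LinearMap.id tau2 + TensorProduct.map tau2 tau2 + (TensorProduct.comm k (L ⊗[k] L) (L ⊗[k] L)).toLinearMap + (TensorProduct.comm k (L ⊗[k] L) (L ⊗[k] L)).toLinearMap ∘ₗ TensorProduct.map tau2 LinearMap.id + (TensorProduct.comm k (L ⊗[k] L) (L ⊗[k] L)).toLinearMap ∘ₗ TensorProduct.map LinearMap.id tau2 + (TensorProduct.comm k (L ⊗[k] L) (L ⊗[k] L)).toLinearMap ∘ₗ TensorProduct.map tau2 tau2) : (L ⊗[k] L) ⊗[k] (L ⊗[k] L) →ₗ[k] (L ⊗[k] L) ⊗[k] (L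 ⊗[k] L)) (ρ ⊗ₜ[k] ρ) = (ρ ⊗ₜ[k] ρ) + (ρ ⊗ₜ[k] ρ) + (ρ ⊗ₜ[k] ρ) + (ρ ⊗ₜ[k] ρ) + (ρ ⊗ₜ[k] ρ) + (ρ ⊗ₜ[k] ρ) + (ρ ⊗ₜ[k] ρ) + (ρ ⊗ₜ[k] ρ) := by
      simp only [LinearMap.add_apply, LinearMap.comp_apply, LinearMap.id_coe, id_eq,
        TensorProduct.map_tmul, LinearEquiv.coe_coe, TensorProduct.comm_tmul, hsym]
    have hE6 : (((TensorProduct.map (op a) LinearMap.id ∘ₗ (- m1213 op + m1223 op + m1323 (op - op.flip))) - swap12 ∘ₗ (TensorProduct.map (op a) LinearMap.id ∘ₗ (- m1213 op + m1223 op + m1323 (op - op.flip))) - swap23 ∘ₗ swap12 ∘ₗ (TensorProduct.map (op a) LinearMap.id ∘ₗ (- m1213 op + m1223 op + m1323 (op - op.flip))) + swap12 ∘ₗ swap23 ∘ₗ swap12 ∘ₗ (TensorProduct.map (op a) LinearMap.id ∘ₗ (- m1213 op + m1223 op + m1323 (op - op.flip))) + swap23 ∘ₗ swap12 ∘ₗ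 (TensorProduct.map (op.flip a) LinearMap.id ∘ₗ (- m1213 op + m1223 op + m1323 (op - op.flip))) - swap12 ∘ₗ swap23 ∘ₗ swap12 ∘ₗ (TensorProduct.map (op.flip a) LinearMap.id ∘ₗ (- m1213 op + m1223 op + m1323 (op - op.flip)))) : (L ⊗[k] L) ⊗[k] (L ⊗[k] L) →ₗ[k] L ⊗[k] (L ⊗[k] L)) (ρ ⊗ₜ[k] ρ) = 0 := by
      simp only [LinearMap.sub_apply, LinearMap.add_apply, LinearMap.comp_apply,
        LinearMap.neg_apply]
      rw [hS']
      simp only [map_zero, sub_zero, add_zero, zero_add, neg_zero, sub_self]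
    have h : (((((((m1223 op + m1323 (op - op.flip)) - swap12 ∘ₗ (m1223 op + m1323 (op - op.flip))) - ((swap23 ∘ₗ m1213 op + swap23 ∘ₗ m2313 (op - op.flip) ∘ₗ TensorProduct.map tau2 LinearMap.id) - swap12 ∘ₗ (swap23 ∘ₗ m1213 op + swap23 ∘ₗ m2313 (op - op.flip) ∘ₗ TensorProduct.map tau2 LinearMap.id))) ∘ₗ TensorProduct.map ((TensorProduct.map (op a) LinearMap.id + TensorProduct.map LinearMap.id (op a - op.flip a))) LinearMap.id) - ((TensorProduct.map (op a) LinearMap.id ∘ₗ (- m1213 op + m1223 op + m1323 (op - op.flip))) - swap12 ∘ₗ (TensorProduct.map (op a) LinearMap.id ∘ₗ (- m1213 op + m1223 op + m1323 (op - op.flip))) - swap23 ∘ₗ swap12 ∘ₗ (TensorProduct.map (op a) LinearMap.id ∘ₗ (- m1213 op + m1223 op + m1323 (op - op.flip))) + swap12 ∘ₗ swap23 ∘ₗ swap12 ∘ₗ (TensorProduct.map (op a) LinearMap.id ∘ₗ (- m1213 op + m1223 op + m1323 (op - op.flip))) + swap23 ∘ₗ swap12 ∘ₗ (TensorProduct.map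 (op.flip a) LinearMap.id ∘ₗ (- m1213 op + m1223 op + m1323 (op - op.flip))) - swap12 ∘ₗ swap23 ∘ₗ swap12 ∘ₗ (TensorProduct.map (op.flip a) LinearMap.id ∘ₗ (- m1213 op + m1223 op + m1323 (op - op.flip))))) ∘ₗ (LinearMap.id + TensorProduct.map tau2 LinearMap.id + TensorProduct.map LinearMap.id tau2 + TensorProduct.map tau2 tau2 + (TensorProduct.comm k (L ⊗[k] L) (L ⊗[k] L)).toLinearMap + (TensorProduct.comm k (L ⊗[k] L) (L ⊗[k] L)).toLinearMap ∘ₗ TensorProduct.map tau2 LinearMap.id + (TensorProduct.comm k (L ⊗[k] L) (L ⊗[k] L)).toLinearMap ∘ₗ TensorProduct.map LinearMap.id tau2 + (TensorProduct.comm k (L ⊗[k] L) (L ⊗[k] L)).toLinearMap ∘ₗ TensorProduct.map tau2 tau2)) : (L ⊗[k] L) ⊗[k] (L ⊗[k] L) →ₗ[k] L ⊗[k] (L ⊗[k] L)) (ρ ⊗ₜ[k] ρ) = 0 := by rw [hkeymap]; simp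
    rw [LinearMap.comp_apply, hSIG] at h
    simp only [map_add, LinearMap.sub_apply, hE6, sub_zero] at h
    have hC := cancel_eight (k:=k) _ h
    have hC0 : (((((m1223 op + m1323 (op - op.flip)) - swap12 ∘ₗ (m1223 op + m1323 (op - op.flip))) - ((swap23 ∘ₗ m1213 op + swap23 ∘ₗ m2313 (op - op.flip) ∘ₗ TensorProduct.map tau2 LinearMap.id) - swap12 ∘ₗ (swap23 ∘ₗ m1213 op + swap23 ∘ₗ m2313 (op - op.flip) ∘ₗ TensorProduct.map tau2 LinearMap.id))) ∘ₗ TensorProduct.map ((TensorProduct.map (op a) LinearMap.id + TensorProduct.map LinearMap.id (op a - op.flip a))) LinearMap.id) : (L ⊗[k] L) ⊗[k] (L ⊗[k] L) →ₗ[k] L ⊗[k] (L ⊗[k] L)) (ρ ⊗ₜ[k] ρ) = m1223 op ((TensorProduct.map (op a) LinearMap.id ρ + TensorProduct.map LinearMap.id (op a - op.flip a) ρ) ⊗ₜ[k] ρ) + m1323 (op - op.flip) ((TensorProduct.map (op a) LinearMap.id ρ + TensorProduct.map LinearMap.id (op a - op.flip a) ρ) ⊗ₜ[k] ρ) - swap12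 (m1223 op ((TensorProduct.map (op a) LinearMap.id ρ + TensorProduct.map LinearMap.id (op a - op.flip a) ρ) ⊗ₜ[k] ρ) + m1323 (op - op.flip) ((TensorProduct.map (op a) LinearMap.id ρ + TensorProduct.map LinearMap.id (op a - op.flip a) ρ) ⊗ₜ[k] ρ)) - (swap23 (m1213 op ((TensorProduct.map (op a) LinearMap.id ρ + TensorProduct.map LinearMap.id (op a - op.flip a) ρ) ⊗ₜ[k] ρ)) + swap23 (m2313 (op - op.flip) (tau2 (TensorProduct.map (op a) LinearMap.id ρ + TensorProduct.map LinearMap.id (op a - op.flip a) ρ) ⊗ₜ[k] ρ)) - swap12 (swap23 (m1213 op ((TensorProduct.map (op a) LinearMap.id ρ + TensorProduct.map LinearMap.id (op a - op.flip a) ρ) ⊗ₜ[k] ρ)) + swap23 (m2313 (op - op.flip) (tau2 (TensorProduct.map (op a) LinearMap.id ρ + TensorProduct.map LinearMap.id (op a - op.flip a) ρ) ⊗ₜ[k] ρ)))) := by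
      simp only [LinearMap.comp_apply, LinearMap.sub_apply, LinearMap.add_apply,
        TensorProduct.map_tmul, LinearMap.id_coe, id_eq]
    rw [hC0] at hC
    rw [← sub_eq_zero, bR (δ a), bL (δ a), hδ a]
    exact hC
  · intro a b
    simp only [hδ]
    have key1 : ∀ s : L ⊗[k] L, ((TensorProduct.map (op (op a b)) LinearMap.id s + TensorProduct.map LinearMap.id (op (op a b) - op.flip (op a b)) s) - tau2 (TensorProduct.map (op (op a b)) LinearMap.id s + TensorProduct.map LinearMap.id (op (op a b) - op.flip (op a b)) s)) - TensorProduct.map (op a) LinearMap.id ((TensorProduct.map (op b) LinearMap.id s + TensorProduct.map LinearMap.id (op b - op.flip b) s) - tau2 (TensorProduct.map (op b) LinearMap.id s + TensorProduct.map LinearMap.id (op b - op.flip b) s)) - TensorProduct.map LinearMap.id (op a) ((TensorProduct.map (op b) LinearMap.id s + TensorProduct.map LinearMap.id (op b - op.flip b) s) - tau2 (TensorProduct.map (op b) LinearMap.id s + TensorProduct.map LinearMap.id (op b - op.flip b) s)) - TensorProduct.map LinearMap.id (op.flip b) (TensorProduct.map (op a) LinearMap.id s + TensorProduct.map LinearMap.id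 (op a - op.flip a) s) + TensorProduct.map (op.flip b) LinearMap.id (tau2 (TensorProduct.map (op a) LinearMap.id s + TensorProduct.map LinearMap.id (op a - op.flip a) s)) + (((TensorProduct.map (op (op a b)) LinearMap.id (tau2 s) + TensorProduct.map LinearMap.id (op (op a b) - op.flip (op a b)) (tau2 s)) - tau2 (TensorProduct.map (op (op a b)) LinearMap.id (tau2 s) + TensorProduct.map LinearMap.id (op (op a b) - op.flip (op a b)) (tau2 s))) - TensorProduct.map (op a) LinearMap.id ((TensorProduct.map (op b) LinearMap.id (tau2 s) + TensorProduct.map LinearMap.id (op b - op.flip b) (tau2 s)) - tau2 (TensorProduct.map (op b) LinearMap.id (tau2 s) + TensorProduct.map LinearMap.id (op b - op.flip b) (tau2 s))) - TensorProduct.map LinearMap.id (op a) ((TensorProduct.map (op b) LinearMap.id (tau2 s) + TensorProduct.map LinearMap.id (op b - op.flip b) (tau2 s)) - tau2 (TensorProduct.map (op b) LinearMap.id (tau2 s) + TensorProduct.map LinearMap.id (op b - op.flip b) (tau2 s))) - TensorProduct.map LinearMap.id (op.flip b) (TensorProduct.map (op a) LinearMap.id (tau2 s) + TensorProduct.map LinearMap.id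 (op a - op.flip a) (tau2 s)) + TensorProduct.map (op.flip b) LinearMap.id (tau2 (TensorProduct.map (op a) LinearMap.id (tau2 s) + TensorProduct.map LinearMap.id (op a - op.flip a) (tau2 s)))) = 0 := by
      intro s
      induction s using TensorProduct.induction_on with
      | zero => simp
      | tmul u v =>
        simp only [TensorProduct.map_tmul, LinearMap.id_coe, id_eq, tau2_tmul, swap12_tmul, swap23_tmul, m1213_tmul, m1223_tmul, m1323_tmul, m2313_tmul, LinearMap.sub_apply, LinearMap.flip_apply, add_tmul, tmul_add, sub_tmul, tmul_sub, map_add, map_sub, map_neg, neg_tmul, tmul_neg, TensorProduct.assoc_tmul]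
        have H1 : (op (op a u) b) ⊗ₜ[k] v - (op a (op u b)) ⊗ₜ[k] v = (op (op u a) b) ⊗ₜ[k] v - (op u (op a b)) ⊗ₜ[k] v := by rw [← sub_tmul, ← sub_tmul, hpl a u b]
        have H2 : v ⊗ₜ[k] (op (op a u) b) - v ⊗ₜ[k] (op a (op u b)) = v ⊗ₜ[k] (op (op u a) b) - v ⊗ₜ[k] (op u (op a b)) := by rw [← tmul_sub, ← tmul_sub, hpl a u b]
        have H3 : (op (op a v) b) ⊗ₜ[k] u - (op a (op v b)) ⊗ₜ[k] u = (op (op v a) b) ⊗ₜ[k] u - (op v (op a b)) ⊗ₜ[k] u := by rw [← sub_tmul, ← sub_tmul, hpl a v b]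
        have H4 : u ⊗ₜ[k] (op (op a v) b) - u ⊗ₜ[k] (op a (op v b)) = u ⊗ₜ[k] (op (op v a) b) - u ⊗ₜ[k] (op v (op a b)) := by rw [← tmul_sub, ← tmul_sub, hpl a v b]
        have total : (((op (op a u) b) ⊗ₜ[k] v - (op a (op u b)) ⊗ₜ[k] v) - ((op (op u a) b) ⊗ₜ[k] v - (op u (op a b)) ⊗ₜ[k] v)) - ((v ⊗ₜ[k] (op (op a u) b) - v ⊗ₜ[k] (op a (op u b))) - (v ⊗ₜ[k] (op (op u a) b) - v ⊗ₜ[k] (op u (op a b)))) + (((op (op a v) b) ⊗ₜ[k] u - (op a (op v b)) ⊗ₜ[k] u) - ((op (op v a) b) ⊗ₜ[k] u - (op v (op a b)) ⊗ₜ[k] u)) - ((u ⊗ₜ[k] (op (op a v) b) - u ⊗ₜ[k] (op a (op v b))) - (u ⊗ₜ[k] (op (op v a) b) - u ⊗ₜ[k] (op v (op a b)))) = (0 : L ⊗[k] L) := by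
          rw [H1, H2, H3, H4]; abel
        rw [← total]; abel
      | add s1 s2 h1 h2 =>
        simp only [map_add, map_sub, add_tmul, tmul_add, sub_tmul, tmul_sub] at h1 h2 ⊢
        have h12 := congrArg₂ (· + ·) h1 h2
        simp only [add_zero] at h12
        rw [← h12]; abel
    have h := key1 ρ
    rw [hsym] at h
    exact cancel_two (k:=k) _ h
  · intro a b
    simp only [hδ]
    have key2 : ∀ s : L ⊗[k] L, (TensorProduct.map (op (op a b - op b a)) LinearMap.id s + TensorProduct.map LinearMap.id (op (op a b - op b a) - op.flip (op a b - op b a)) s) - TensorProduct.map LinearMap.id (op.flip b - op b) (TensorProduct.map (op a) LinearMap.id s + TensorProduct.map LinearMap.id (op a - op.flip a) s) - TensorProduct.map LinearMap.id (op a - op.flip a) (TensorProduct.map (op b) LinearMap.id s + TensorProduct.map LinearMap.id (op b - op.flip b) s) - TensorProduct.map (op a) LinearMap.id (TensorProduct.map (op b) LinearMap.id s + TensorProduct.map LinearMap.id (op b - op.flip b) s) + TensorProduct.map (op b) LinearMap.id (TensorProduct.map (op a) LinearMap.id s + TensorProduct.map LinearMap.id (op a - op.flip a) s) + ((TensorProduct.map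 (op (op a b - op b a)) LinearMap.id (tau2 s) + TensorProduct.map LinearMap.id (op (op a b - op b a) - op.flip (op a b - op b a)) (tau2 s)) - TensorProduct.map LinearMap.id (op.flip b - op b) (TensorProduct.map (op a) LinearMap.id (tau2 s) + TensorProduct.map LinearMap.id (op a - op.flip a) (tau2 s)) - TensorProduct.map LinearMap.id (op a - op.flip a) (TensorProduct.map (op b) LinearMap.id (tau2 s) + TensorProduct.map LinearMap.id (op b - op.flip b) (tau2 s)) - TensorProduct.map (op a) LinearMap.id (TensorProduct.map (op b) LinearMap.id (tau2 s) + TensorProduct.map LinearMap.id (op b - op.flip b) (tau2 s)) + TensorProduct.map (op b) LinearMap.id (TensorProduct.map (op a) LinearMap.id (tau2 s) + TensorProduct.map LinearMap.id (op a - op.flip a) (tau2 s))) = 0 := by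
      intro s
      induction s using TensorProduct.induction_on with
      | zero => simp
      | tmul u v =>
        simp only [TensorProduct.map_tmul, LinearMap.id_coe, id_eq, tau2_tmul, swap12_tmul, swap23_tmul, m1213_tmul, m1223_tmul, m1323_tmul, m2313_tmul, LinearMap.sub_apply, LinearMap.flip_apply, add_tmul, tmul_add, sub_tmul, tmul_sub, map_add, map_sub, map_neg, neg_tmul, tmul_neg, TensorProduct.assoc_tmul]
        have H1 : (op (op a b) u) ⊗ₜ[k] v - (op a (op b u)) ⊗ₜ[k] v = (op (op b a) u) ⊗ₜ[k] v - (op b (op a u)) ⊗ₜ[k] v := by rw [← sub_tmul, ← sub_tmul, hpl a b u]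
        have H2 : v ⊗ₜ[k] (op (op a b) u) - v ⊗ₜ[k] (op a (op b u)) = v ⊗ₜ[k] (op (op b a) u) - v ⊗ₜ[k] (op b (op a u)) := by rw [← tmul_sub, ← tmul_sub, hpl a b u]
        have H3 : v ⊗ₜ[k] (op (op a u) b) - v ⊗ₜ[k] (op a (op u b)) = v ⊗ₜ[k] (op (op u a) b) - v ⊗ₜ[k] (op u (op a b)) := by rw [← tmul_sub, ← tmul_sub, hpl a u b]
        have H4 : v ⊗ₜ[k] (op (op b u) a) - v ⊗ₜ[k] (op b (op u a)) = v ⊗ₜ[k] (op (op u b) a) - v ⊗ₜ[k] (op u (op b a)) := by rw [← tmul_sub, ← tmul_sub, hpl b u a]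
        have H5 : (op (op a b) v) ⊗ₜ[k] u - (op a (op b v)) ⊗ₜ[k] u = (op (op b a) v) ⊗ₜ[k] u - (op b (op a v)) ⊗ₜ[k] u := by rw [← sub_tmul, ← sub_tmul, hpl a b v]
        have H6 : u ⊗ₜ[k] (op (op a b) v) - u ⊗ₜ[k] (op a (op b v)) = u ⊗ₜ[k] (op (op b a) v) - u ⊗ₜ[k] (op b (op a v)) := by rw [← tmul_sub, ← tmul_sub, hpl a b v]
        have H7 : u ⊗ₜ[k] (op (op a v) b) - u ⊗ₜ[k] (op a (op v b)) = u ⊗ₜ[k] (op (op v a) b) - u ⊗ₜ[k] (op v (op a b)) := by rw [← tmul_sub, ← tmul_sub, hpl a v b]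
        have H8 : u ⊗ₜ[k] (op (op b v) a) - u ⊗ₜ[k] (op b (op v a)) = u ⊗ₜ[k] (op (op v b) a) - u ⊗ₜ[k] (op v (op b a)) := by rw [← tmul_sub, ← tmul_sub, hpl b v a]
        have total : (((op (op a b) u) ⊗ₜ[k] v - (op a (op b u)) ⊗ₜ[k] v) - ((op (op b a) u) ⊗ₜ[k] v - (op b (op a u)) ⊗ₜ[k] v)) + ((v ⊗ₜ[k] (op (op a b) u) - v ⊗ₜ[k] (op a (op b u))) - (v ⊗ₜ[k] (op (op b a) u) - v ⊗ₜ[k] (op b (op a u)))) - ((v ⊗ₜ[k] (op (op a u) b) - v ⊗ₜ[k] (op a (op u b))) - (v ⊗ₜ[k] (op (op u a) b) - v ⊗ₜ[k] (op u (op a b)))) + ((v ⊗ₜ[k] (op (op b u) a) - v ⊗ₜ[k] (op b (op u a))) - (v ⊗ₜ[k] (op (op u b) a) - v ⊗ₜ[k] (op u (op b a)))) + (((op (op a b) v) ⊗ₜ[k] u - (op a (op b v)) ⊗ₜ[k] u) - ((op (op b a) v) ⊗ₜ[k] u - (op b (op a v)) ⊗ₜ[k] u)) + ((u ⊗ₜ[k]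 (op (op a b) v) - u ⊗ₜ[k] (op a (op b v))) - (u ⊗ₜ[k] (op (op b a) v) - u ⊗ₜ[k] (op b (op a v)))) - ((u ⊗ₜ[k] (op (op a v) b) - u ⊗ₜ[k] (op a (op v b))) - (u ⊗ₜ[k] (op (op v a) b) - u ⊗ₜ[k] (op v (op a b)))) + ((u ⊗ₜ[k] (op (op b v) a) - u ⊗ₜ[k] (op b (op v a))) - (u ⊗ₜ[k] (op (op v b) a) - u ⊗ₜ[k] (op v (op b a)))) = (0 : L ⊗[k] L) := by
          rw [H1, H2, H3, H4, H5, H6, H7, H8]; abel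
        rw [← total]; abel
      | add s1 s2 h1 h2 =>
        simp only [map_add, map_sub, add_tmul, tmul_add, sub_tmul, tmul_sub] at h1 h2 ⊢
        have h12 := congrArg₂ (· + ·) h1 h2
        simp only [add_zero] at h12
        rw [← h12]; abel
    have h := key2 ρ
    rw [hsym] at h
    exact cancel_two (k:=k) _ h
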